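/- Let v be a transferable-utility coalitional game on the player set I = {1,…,N} with N ≥ 1, and let m̂_1,…,m̂_N ∈ ℝ^I be its marginal contribution vectors. Then the Shapley value φ(v) is the unique global minimizer over ℝ^I of the function F(x) = (1/2) Σ_{i∈I} ‖x − m̂_i‖², where ‖·‖ is the Euclidean norm. -/

import Mathlib

/-!
Every ordering has exactly one agent in first position, so averaging the `m̂_i` over the agents
averages `m_σ` over all orderings: the Shapley value is the centroid of the points `m̂_i`.
The parallel-axis identity `Σ ‖x - m̂_i‖² = Σ ‖φ - m̂_i‖² + N ‖x - φ‖²` then shows that the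
centroid is the unique minimizer of the sum of squared distances.
-/

/-- The set of predecessors of player `j` in the ordering `σ`
(`σ p` is the player occupying position `p`). -/
def preds {N : ℕ} (σ : Equiv.Perm (Fin N)) (j : Fin N) : Finset (Fin N) :=
  Finset.univ.filter fun i => σ.symm i < σ.symm j

/-- The incremental marginal contribution vector of the ordering `σ`:
`(m_σ)_j = v(P_j^σ ∪ {j}) − v(P_j^σ)`. -/
noncomputable def margVec {N : ℕ} (v : Finset (Fin N) → ℝ) (σ : Equiv.Perm (Fin N))
    (j : Fin N) : ℝ :=
  v (preds σ j ∪ {j}) - v (preds σ j)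

/-- The Shapley value `φ_j(v) = (1/N!) Σ_σ (v(P_j^σ ∪ {j}) − v(P_j^σ))`. -/
noncomputable def shapley {N : ℕ} (v : Finset (Fin N) → ℝ) (j : Fin N) : ℝ :=
  (1 / (N.factorial : ℝ)) * ∑ σ : Equiv.Perm (Fin N), margVec v σ j

/-- The marginal contribution vector of agent `i`:
`m̂_i = (1/(N−1)!) Σ_{σ ∈ π_i} m_σ`, where `π_i` is the set of orderings in which
agent `i` occupies the first position. -/
noncomputable def mhat {N : ℕ} (hN : 0 < N) (v : Finset (Fin N) → ℝ) (i : Fin N)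
    (j : Fin N) : ℝ :=
  (1 / ((N - 1).factorial : ℝ)) *
    ∑ σ ∈ Finset.univ.filter (fun σ : Equiv.Perm (Fin N) => σ ⟨0, hN⟩ = i), margVec v σ j

/-- The objective `F(x) = (1/2) Σ_{i∈I} ‖x − m̂_i‖²` (Euclidean norm). -/
noncomputable def Fobj {N : ℕ} (hN : 0 < N) (v : Finset (Fin N) → ℝ)
    (x : EuclideanSpace ℝ (Fin N)) : ℝ :=
  (1 / 2 : ℝ) * ∑ i : Fin N,
    ‖x - (WithLp.equiv 2 (Fin N → ℝ)).symm (fun j => mhat hN v i j)‖ ^ 2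

section Centroid

variable {ι E : Type*} [Fintype ι] [NormedAddCommGroup E] [InnerProductSpace ℝ E]

theorem sum_norm_sub_sq_eq_of_sum_eq_card_smul {m : ι → E} {c : E}
    (hc : ∑ i, m i = (Fintype.card ι : ℝ) • c) (x : E) :
    ∑ i, ‖x - m i‖ ^ 2 = ∑ i, ‖c - m i‖ ^ 2 + Fintype.card ι * ‖x - c‖ ^ 2 := by
  have hcross : ∑ i, inner ℝ (x - c) (c - m i) = 0 := by
    rw [← inner_sum, Finset.sum_sub_distrib, hc, Finset.sum_const, Finset.card_univ,
      ← Nat.cast_smul_eq_nsmul ℝ, sub_self, inner_zero_right]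
  calc ∑ i, ‖x - m i‖ ^ 2
      = ∑ i, (‖x - c‖ ^ 2 + 2 * inner ℝ (x - c) (c - m i) + ‖c - m i‖ ^ 2) := by
        refine Finset.sum_congr rfl fun i _ => ?_
        rw [← norm_add_sq_real, sub_add_sub_cancel]
    _ = ∑ i, ‖c - m i‖ ^ 2 + Fintype.card ι * ‖x - c‖ ^ 2 := by
        rw [Finset.sum_add_distrib, Finset.sum_add_distrib, ← Finset.mul_sum, hcross,
          Finset.sum_const, Finset.card_univ, nsmul_eq_mul]
        ring

theorem sum_norm_sub_sq_le_of_sum_eq_card_smul {m : ι → E} {c : E}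
    (hc : ∑ i, m i = (Fintype.card ι : ℝ) • c) (x : E) :
    ∑ i, ‖c - m i‖ ^ 2 ≤ ∑ i, ‖x - m i‖ ^ 2 := by
  rw [sum_norm_sub_sq_eq_of_sum_eq_card_smul hc x]
  exact le_add_of_nonneg_right (by positivity)

theorem eq_of_sum_norm_sub_sq_le_of_sum_eq_card_smul [Nonempty ι] {m : ι → E} {c : E}
    (hc : ∑ i, m i = (Fintype.card ι : ℝ) • c) {x : E}
    (hx : ∑ i, ‖x - m i‖ ^ 2 ≤ ∑ i, ‖c - m i‖ ^ 2) : x = c := by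
  rw [sum_norm_sub_sq_eq_of_sum_eq_card_smul hc x] at hx
  have hcard : (0 : ℝ) < Fintype.card ι := by exact_mod_cast Fintype.card_pos
  have hdist : ‖x - c‖ ^ 2 ≤ 0 := nonpos_of_mul_nonpos_right (by linarith) hcard
  simpa [sub_eq_zero] using hdist

end Centroid

theorem sum_mhat_eq_mul_shapley {N : ℕ} (hN : 0 < N) (v : Finset (Fin N) → ℝ) (j : Fin N) :
    ∑ i, mhat hN v i j = N * shapley v j := by
  have hfiber : ∑ i, ∑ σ ∈ Finset.univ.filter (fun σ : Equiv.Perm (Fin N) => σ ⟨0, hN⟩ = i),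
      margVec v σ j = ∑ σ, margVec v σ j :=
    Finset.sum_fiberwise _ _ _
  have hfac : (N.factorial : ℝ) = N * (N - 1).factorial := by
    exact_mod_cast (Nat.mul_factorial_pred hN.ne').symm
  simp only [mhat, shapley, ← Finset.mul_sum, hfiber, hfac]
  field_simp

theorem sum_mhat_eq_card_smul_shapley {N : ℕ} (hN : 0 < N) (v : Finset (Fin N) → ℝ) :
    ∑ i, (WithLp.equiv 2 (Fin N → ℝ)).symm (fun j => mhat hN v i j) =
      (Fintype.card (Fin N) : ℝ) • (WithLp.equiv 2 (Fin N → ℝ)).symm (fun j => shapley v j) := by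
  ext j
  simp [WithLp.ofLp_sum, sum_mhat_eq_mul_shapley]

theorem stmt_8_general (N : ℕ) (hN : 0 < N) (v : Finset (Fin N) → ℝ) :
    (∀ x, Fobj hN v ((WithLp.equiv 2 (Fin N → ℝ)).symm (fun j => shapley v j)) ≤ Fobj hN v x) ∧
    (∀ x, (∀ y, Fobj hN v x ≤ Fobj hN v y) →
      x = (WithLp.equiv 2 (Fin N → ℝ)).symm (fun j => shapley v j)) := by
  have : Nonempty (Fin N) := ⟨⟨0, hN⟩⟩
  have hc := sum_mhat_eq_card_smul_shapley hN v
  refine ⟨fun x => ?_, fun x hx => ?_⟩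
  · exact mul_le_mul_of_nonneg_left (sum_norm_sub_sq_le_of_sum_eq_card_smul hc x) (by norm_num)
  · exact eq_of_sum_norm_sub_sq_le_of_sum_eq_card_smul hc
      (le_of_mul_le_mul_left (hx _) (by norm_num : (0 : ℝ) < 1 / 2))

/-- the Shapley value is the unique global minimizer of
`F(x) = (1/2) Σ_i ‖x − m̂_i‖²`. -/
theorem stmt_8 (N : ℕ) (hN : 0 < N) (v : Finset (Fin N) → ℝ) (hv : v ∅ = 0) :
    (∀ x, Fobj hN v ((WithLp.equiv 2 (Fin N → ℝ)).symm (fun j => shapley v j)) ≤ Fobj hN v x) ∧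
    (∀ x, (∀ y, Fobj hN v x ≤ Fobj hN v y) →
      x = (WithLp.equiv 2 (Fin N → ℝ)).symm (fun j => shapley v j)) :=
  stmt_8_general N hN v
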